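/- arXiv:math/9806036 — 2 statements merged into one kernel-verified Lean document; each statement's English description precedes it below -/
import Mathlib

section
/- Suppose B is a factor antichain. For v ∈ B let C_v(s,t) be the formal power series in s over ℤ[t] whose coefficient of s^n is the sum of (t−1)^l over clusters of length n whose last occurrence (i_l,b_l) satisfies b_l = v. Then for every v ∈ B the identity C_v(s,t) = (t−1)·s^{|v|} + (t−1)·Σ_{u ∈ B} (u:v)(s) · C_u(s,t) holds in (ℤ[t])[[s]]. -/
/-- `(i, b)` is an occurrence of a member of `B` in the word `w`. -/
def IsOcc {V : Type*} (B : Finset (List V)) (w : List V) (p : ℕ × List V) : Prop :=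
  p.2 ∈ B ∧ (w.drop p.1).take p.2.length = p.2

/-- `(w, L)` is a cluster. -/
def IsCluster {V : Type*} (B : Finset (List V)) (w : List V)
    (L : List (ℕ × List V)) : Prop :=
  L ≠ [] ∧ (∀ p ∈ L, IsOcc B w p) ∧
    (L.map Prod.fst).head? = some 0 ∧
    (L.map fun p => p.1 + p.2.length).getLast? = some w.length ∧
    L.Chain' fun p q =>
      p.1 < q.1 ∧ p.1 + p.2.length < q.1 + q.2.length ∧ q.1 < p.1 + p.2.length

/-- The number of clusters with word length `n`, exactly `l` occurrences, and whose
last occurrence is an occurrence of `v`. -/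
noncomputable def clusterCountEnd {V : Type*} [Fintype V] (B : Finset (List V))
    (v : List V) (n l : ℕ) : ℕ :=
  Nat.card {q : (Fin n → V) × List (ℕ × List V) //
    IsCluster B (List.ofFn q.1) q.2 ∧ q.2.length = l ∧
      (q.2.map Prod.snd).getLast? = some v}

/-- `C_v(s,t) ∈ ℤ[t][[s]]`: the coefficient of `s^n` is the sum of `(t-1)^l` over
clusters of length `n` whose last occurrence is an occurrence of `v`. -/
noncomputable def clusterGFEndT {V : Type*} [Fintype V] (B : Finset (List V))
    (v : List V) : PowerSeries (Polynomial ℤ) :=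
  PowerSeries.mk fun n =>
    ∑ l ∈ Finset.range (n + 1),
      (Polynomial.X - 1 : Polynomial ℤ) ^ l * clusterCountEnd B v n l

/-- The correlation polynomial `(u:v)(s) = ∑_{x ∈ OVERLAP(u,v)} s^{|v|-|x|}`,
with coefficients in `ℤ[t]`. -/
noncomputable def corrT {V : Type*} [DecidableEq V] (u v : List V) :
    PowerSeries (Polynomial ℤ) :=
  ∑ k ∈ Finset.Ico 1 (min u.length v.length),
    if u.drop (u.length - k) = v.take k then PowerSeries.X ^ (v.length - k) else 0

/-!
Removing the last occurrence `(i, v)` from a cluster with at least two occurrences leaves a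
cluster on a prefix of the word, whose last occurrence `u` overlaps `v` in a word of
`OVERLAP(u, v)` of some length `k`; the word loses `|v| - k` letters and the weight `(t - 1)^l`
loses one factor `t - 1`. Conversely every such cluster extends uniquely by `v`. Together with
the one-occurrence cluster `(v, ((0, v)))`, this bijection gives the identity coefficientwise.
-/

open Finset

section Clusters

variable {V : Type*} {B : Finset (List V)}

def OverlapStep (p q : ℕ × List V) : Prop :=
  p.1 < q.1 ∧ p.1 + p.2.length < q.1 + q.2.length ∧ q.1 < p.1 + p.2.length

theorem isOcc_append_iff {w z : List V} {p : ℕ × List V} (hp : p.1 + p.2.length ≤ w.length) :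
    IsOcc B (w ++ z) p ↔ IsOcc B w p := by
  unfold IsOcc
  rw [List.drop_append_of_le_length (by omega),
    List.take_append_of_le_length (by rw [List.length_drop]; omega)]

theorem isOcc_iff_drop_eq {w : List V} {p : ℕ × List V} (hp : p.1 + p.2.length = w.length) :
    IsOcc B w p ↔ p.2 ∈ B ∧ w.drop p.1 = p.2 := by
  unfold IsOcc
  rw [List.take_of_length_le (by rw [List.length_drop]; omega)]

theorem end_le_of_isChain {L : List (ℕ × List V)} (h : L.IsChain OverlapStep) {e : ℕ}
    (he : (L.map fun p => p.1 + p.2.length).getLast? = some e) :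
    ∀ p ∈ L, p.1 + p.2.length ≤ e := by
  refine h.backwards_induction _ _ (fun x y hxy hy => by unfold OverlapStep at hxy; omega) ?_
  intro hne
  rw [List.getLast?_map, List.getLast?_eq_some_getLast hne] at he
  simp only [Option.map_some, Option.some.injEq] at he
  omega

theorem getLast_snd_eq_of_getLast?_map {L : List (ℕ × List V)} (hL : L ≠ []) {u : List V}
    (hu : (L.map Prod.snd).getLast? = some u) : (L.getLast hL).2 = u := by
  simpa [List.getLast?_eq_some_getLast hL] using hu

namespace IsCluster

variable {w : List V} {L : List (ℕ × List V)} {u : List V}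

theorem end_le (h : IsCluster B w L) : ∀ p ∈ L, p.1 + p.2.length ≤ w.length :=
  end_le_of_isChain h.2.2.2.2 h.2.2.2.1

theorem length_le_of_forall_fst_lt (h : IsCluster B w L) {m : ℕ} (hm : ∀ p ∈ L, p.1 < m) :
    L.length ≤ m := by
  have hsorted : (L.map Prod.fst).Pairwise (· < ·) :=
    List.isChain_iff_pairwise.mp ((List.isChain_map _).mpr (h.2.2.2.2.imp fun _ _ h => h.1))
  have hsub : (L.map Prod.fst).toFinset ⊆ range m := by
    intro i hi
    obtain ⟨p, hp, rfl⟩ := List.mem_map.mp (List.mem_toFinset.mp hi)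
    exact mem_range.mpr (hm p hp)
  simpa [List.toFinset_card_of_nodup (hsorted.imp ne_of_lt)] using card_le_card hsub

theorem length_le (hB : ∀ b ∈ B, b ≠ []) (h : IsCluster B w L) : L.length ≤ w.length :=
  h.length_le_of_forall_fst_lt fun p hp => by
    have := h.end_le p hp
    have := List.length_pos_iff.mpr (hB p.2 (h.2.1 p hp).1)
    omega

theorem getLast_end (h : IsCluster B w L) :
    (L.getLast h.1).1 + (L.getLast h.1).2.length = w.length := by
  simpa [List.getLast?_eq_some_getLast h.1] using h.2.2.2.1

theorem drop_getLast (h : IsCluster B w L) : w.drop (L.getLast h.1).1 = (L.getLast h.1).2 :=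
  ((isOcc_iff_drop_eq h.getLast_end).mp (h.2.1 _ (List.getLast_mem h.1))).2

theorem length_le_of_getLast? (h : IsCluster B w L) (hu : (L.map Prod.snd).getLast? = some u) :
    u.length ≤ w.length := by
  have := h.getLast_end
  rw [getLast_snd_eq_of_getLast?_map h.1 hu] at this
  omega

theorem mem_of_getLast? (h : IsCluster B w L) (hu : (L.map Prod.snd).getLast? = some u) :
    u ∈ B :=
  getLast_snd_eq_of_getLast?_map h.1 hu ▸ (h.2.1 _ (List.getLast_mem h.1)).1

theorem eq_of_append_eq {w' : List V} {L' : List (ℕ × List V)} {v : List V} {k k' : ℕ}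
    (h : IsCluster B w L) (h' : IsCluster B w' L') (hk : k < v.length) (hk' : k' < v.length)
    (hw : w ++ v.drop k = w' ++ v.drop k')
    (hL : L ++ [(w.length - k, v)] = L' ++ [(w'.length - k', v)]) :
    w = w' ∧ L = L' ∧ k = k' := by
  obtain ⟨rfl, -⟩ := List.append_inj' hL rfl
  obtain ⟨rfl, hdrop⟩ := List.append_inj hw (h.getLast_end.symm.trans h'.getLast_end)
  have := congrArg List.length hdrop
  simp only [List.length_drop] at this
  exact ⟨rfl, rfl, by omega⟩

end IsCluster

theorem isCluster_singleton_iff {w : List V} {a : ℕ × List V} :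
    IsCluster B w [a] ↔ a = (0, w) ∧ w ∈ B := by
  obtain ⟨i, b⟩ := a
  simp only [IsCluster, IsOcc, ne_eq, List.cons_ne_nil, not_false_eq_true, List.mem_singleton,
    forall_eq, List.map_cons, List.map_nil, List.head?_cons, Option.some.injEq,
    List.getLast?_singleton, List.Chain', List.isChain_singleton, and_true, true_and, Prod.mk.injEq]
  constructor
  · rintro ⟨⟨hb, hwb⟩, rfl, hlen⟩
    simp only [zero_add, List.drop_zero] at hwb hlen
    rw [hlen, List.take_length] at hwb
    exact ⟨⟨rfl, hwb.symm⟩, hwb ▸ hb⟩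
  · rintro ⟨⟨rfl, rfl⟩, hb⟩
    simp [hb]

theorem isCluster_append_singleton_iff {w z : List V} {M : List (ℕ × List V)} (hM : M ≠ [])
    {a : ℕ × List V} :
    (IsCluster B (w ++ z) (M ++ [a]) ∧
        (M.map fun p => p.1 + p.2.length).getLast? = some w.length) ↔
      IsCluster B w M ∧ OverlapStep (M.getLast hM) a ∧ a.2 ∈ B ∧ (w ++ z).drop a.1 = a.2 ∧
        a.1 + a.2.length = w.length + z.length := by
  have hM' : M.map Prod.fst ≠ [] := by simpa using hM
  simp only [IsCluster, List.Chain', List.isChain_append, List.getLast?_eq_some_getLast hM,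
    List.head?_append_of_ne_nil _ hM', ne_eq, List.append_eq_nil_iff, List.cons_ne_nil,
    and_false, not_false_eq_true, true_and, hM, List.forall_mem_append,
    List.forall_mem_singleton, List.map_append, List.map_cons, List.map_nil,
    List.getLast?_concat, Option.some.injEq, List.length_append, List.isChain_singleton,
    List.head?_cons, Option.mem_def, forall_eq']
  constructor
  · rintro ⟨⟨⟨hM_occ, ha⟩, h0, hend, hchain, hstep⟩, hlast⟩
    have hle := end_le_of_isChain hchain hlast
    obtain ⟨hab, hdrop⟩ := (isOcc_iff_drop_eq (by simpa using hend)).mp ha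
    exact ⟨⟨fun p hp => (isOcc_append_iff (hle p hp)).mp (hM_occ p hp), h0, hlast, hchain⟩, hstep,
      hab, hdrop, hend⟩
  · rintro ⟨⟨hM_occ, h0, hlast, hchain⟩, hstep, hab, hdrop, hend⟩
    have hle := end_le_of_isChain hchain hlast
    refine ⟨⟨⟨fun p hp => (isOcc_append_iff (hle p hp)).mpr (hM_occ p hp),
      (isOcc_iff_drop_eq (by simpa using hend)).mpr ⟨hab, hdrop⟩⟩, h0, hend, hchain, hstep⟩, hlast⟩

section Overlaps

variable [DecidableEq V]

def overlapLengths (u v : List V) : Finset ℕ :=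
  (Ico 1 (min u.length v.length)).filter fun k => u.drop (u.length - k) = v.take k

theorem mem_overlapLengths {u v : List V} {k : ℕ} :
    k ∈ overlapLengths u v ↔
      1 ≤ k ∧ k < u.length ∧ k < v.length ∧ u.drop (u.length - k) = v.take k := by
  simp [overlapLengths, and_assoc]

theorem corrT_eq_sum_overlapLengths (u v : List V) :
    corrT u v = ∑ k ∈ overlapLengths u v, PowerSeries.X ^ (v.length - k) := by
  rw [corrT, overlapLengths, sum_filter]

theorem coeff_corrT_mul (u v : List V) (f : PowerSeries (Polynomial ℤ)) (n : ℕ) :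
    PowerSeries.coeff n (corrT u v * f) = ∑ k ∈ overlapLengths u v,
      if v.length - k ≤ n then PowerSeries.coeff (n - (v.length - k)) f else 0 := by
  simp only [corrT_eq_sum_overlapLengths, sum_mul, map_sum, PowerSeries.coeff_X_pow_mul']

namespace IsCluster

variable {w : List V} {M : List (ℕ × List V)} {u v : List V} {k : ℕ}

theorem snoc (h : IsCluster B w M) (hu : (M.map Prod.snd).getLast? = some u) (hv : v ∈ B)
    (hk : k ∈ overlapLengths u v) :
    IsCluster B (w ++ v.drop k) (M ++ [(w.length - k, v)]) := by
  obtain ⟨hk1, hku, hkv, hmatch⟩ := mem_overlapLengths.mp hk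
  have hbu := getLast_snd_eq_of_getLast?_map h.1 hu
  have hend := h.getLast_end
  have hdrop := h.drop_getLast
  rw [hbu] at hend hdrop
  have hsuffix : w.drop (w.length - k) = v.take k := by
    rw [show w.length - k = (M.getLast h.1).1 + (u.length - k) by omega, ← List.drop_drop,
      hdrop, hmatch]
  refine ((isCluster_append_singleton_iff h.1).mpr ⟨h, ?_, hv, ?_, ?_⟩).1
  · simp only [OverlapStep, hbu]
    omega
  · rw [List.drop_append_of_le_length (by omega), hsuffix, List.take_append_drop]
  · simp only [List.length_drop]
    omega

theorem exists_eq_snoc (h : IsCluster B w M) (hM : M.length ≠ 1)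
    (hv : (M.map Prod.snd).getLast? = some v) :
    ∃ u k w' M', IsCluster B w' M' ∧ (M'.map Prod.snd).getLast? = some u ∧
      k ∈ overlapLengths u v ∧ w = w' ++ v.drop k ∧ M = M' ++ [(w'.length - k, v)] := by
  obtain ⟨M', a, rfl⟩ := (List.eq_nil_or_concat' M).resolve_left h.1
  have hM' : M' ≠ [] := by rintro rfl; simp at hM
  have hav : a.2 = v := by simpa using hv
  obtain ⟨e, he_def⟩ :
      ∃ e, (M'.getLast hM').1 + (M'.getLast hM').2.length = e := ⟨_, rfl⟩
  have he : e ≤ w.length := he_def ▸ h.end_le _ (List.mem_append_left _ (List.getLast_mem hM'))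
  have hlen : (w.take e).length = e := by simp [he]
  have hlast : (M'.map fun p => p.1 + p.2.length).getLast? = some (w.take e).length := by
    simp [List.getLast?_eq_some_getLast hM', he_def, hlen]
  obtain ⟨hcl, ⟨hba, hend, hae⟩, -, hdrop, -⟩ :=
    (isCluster_append_singleton_iff hM').mp ⟨by rwa [List.take_append_drop], hlast⟩
  rw [List.take_append_drop, hav] at hdrop
  have hbdrop : (w.take e).drop (M'.getLast hM').1 = (M'.getLast hM').2 := hcl.drop_getLast
  have hbu : (M'.map Prod.snd).getLast? = some (M'.getLast hM').2 := by
    simp [List.getLast?_eq_some_getLast hM']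
  generalize M'.getLast hM' = b at *
  rw [hav] at hend
  refine ⟨b.2, e - a.1, w.take e, M', hcl, hbu, ?_, ?_, ?_⟩
  · refine mem_overlapLengths.mpr ⟨by omega, by omega, by omega, ?_⟩
    have := congrArg (List.drop (b.2.length - (e - a.1))) hbdrop
    rwa [List.drop_drop, show b.1 + (b.2.length - (e - a.1)) = a.1 by omega, List.drop_take,
      hdrop, eq_comm] at this
  · rw [← hdrop, List.drop_drop, show a.1 + (e - a.1) = e by omega, List.take_append_drop]
  · rw [hlen, show e - (e - a.1) = a.1 by omega, ← hav]

end IsCluster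

end Overlaps

theorem List.finite_setOf_length_le_forall_mem {α : Type*} {s : Set α} (hs : s.Finite) (n : ℕ) :
    {l : List α | l.length ≤ n ∧ ∀ x ∈ l, x ∈ s}.Finite := by
  have := hs.to_subtype
  refine ((List.finite_length_le s n).image (List.map Subtype.val)).subset ?_
  rintro l ⟨hl, hls⟩
  exact ⟨l.attachWith _ hls, by simpa using hl, List.attachWith_map_subtype_val hls⟩

def clustersEndingIn (B : Finset (List V)) (v : List V) (n : ℕ) :
    Set (List V × List (ℕ × List V)) :=
  {q | q.1.length = n ∧ IsCluster B q.1 q.2 ∧ (q.2.map Prod.snd).getLast? = some v}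

theorem clustersEndingIn_finite [Finite V] (B : Finset (List V)) (v : List V) (n : ℕ) :
    (clustersEndingIn B v n).Finite := by
  refine ((List.finite_length_eq V n).prod (List.finite_setOf_length_le_forall_mem
    ((Set.finite_Iio (n + 1)).prod B.finite_toSet) (n + 1))).subset ?_
  rintro ⟨w, L⟩ ⟨rfl, h, -⟩
  have hlt : ∀ p ∈ L, p.1 < w.length + 1 := fun p hp =>
    Nat.lt_succ_of_le ((Nat.le_add_right _ _).trans (h.end_le p hp))
  exact ⟨rfl, h.length_le_of_forall_fst_lt hlt, fun p hp => ⟨hlt p hp, (h.2.1 p hp).1⟩⟩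

section Weights

variable [Finite V]

noncomputable def clusterFinset (B : Finset (List V)) (v : List V) (n : ℕ) :
    Finset (List V × List (ℕ × List V)) :=
  (clustersEndingIn_finite B v n).toFinset

@[simp]
theorem mem_clusterFinset {v : List V} {n : ℕ} {q : List V × List (ℕ × List V)} :
    q ∈ clusterFinset B v n ↔
      q.1.length = n ∧ IsCluster B q.1 q.2 ∧ (q.2.map Prod.snd).getLast? = some v :=
  Set.Finite.mem_toFinset _

theorem clusterFinset_zero {u : List V} (hu : u ≠ []) : clusterFinset B u 0 = ∅ := by
  refine eq_empty_of_forall_notMem fun q hq => hu ?_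
  obtain ⟨hlen, h, hlast⟩ := mem_clusterFinset.mp hq
  exact List.length_eq_zero_iff.mp (Nat.le_zero.mp (hlen ▸ h.length_le_of_getLast? hlast))

theorem filter_clusterFinset_length_eq_one {v : List V} (hv : v ∈ B) (n : ℕ) :
    {q ∈ clusterFinset B v n | q.2.length = 1} =
      if n = v.length then {(v, [(0, v)])} else ∅ := by
  ext ⟨w, L⟩
  simp only [mem_filter, mem_clusterFinset, List.length_eq_one_iff]
  constructor
  · rintro ⟨⟨rfl, h, hlast⟩, a, rfl⟩
    obtain ⟨rfl, -⟩ := isCluster_singleton_iff.mp h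
    obtain rfl : w = v := by simpa using hlast
    simp
  · intro h
    split_ifs at h with hn
    · obtain ⟨rfl, rfl⟩ := by simpa using h
      exact ⟨⟨hn.symm, isCluster_singleton_iff.mpr ⟨rfl, hv⟩, rfl⟩, _, rfl⟩
    · simp at h

variable {R : Type*} [CommSemiring R]

noncomputable def clusterWeightSum (B : Finset (List V)) (v : List V) (n : ℕ) (x : R) : R :=
  ∑ q ∈ clusterFinset B v n, x ^ q.2.length

section Recursion

variable [DecidableEq V] {v : List V}

-- When `|v| - k > n` the truncated subtraction gives `n - (|v| - k) = 0`; such summands vanish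
-- because the last occurrence `u` of a cluster is at least `k + 1` letters long.
theorem sum_filter_length_ne_one_clusterFinset (hv : v ∈ B) (n : ℕ) (x : R) :
    ∑ q ∈ clusterFinset B v n with q.2.length ≠ 1, x ^ q.2.length =
      x * ∑ u ∈ B, ∑ k ∈ overlapLengths u v, clusterWeightSum B u (n - (v.length - k)) x := by
  simp only [clusterWeightSum, mul_sum, ← pow_succ', sum_sigma']
  symm
  refine sum_nbij (fun p => (p.2.2.1 ++ v.drop p.2.1, p.2.2.2 ++ [(p.2.2.1.length - p.2.1, v)]))
    ?_ ?_ ?_ fun p _ => by simp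
  · rintro ⟨u, k, w, M⟩ hp
    simp only [mem_sigma, mem_clusterFinset] at hp
    obtain ⟨-, hk, hlen, h, hlast⟩ := hp
    have hu := h.length_le_of_getLast? hlast
    obtain ⟨hk1, hku, hkv, -⟩ := mem_overlapLengths.mp hk
    refine mem_filter.mpr ⟨mem_clusterFinset.mpr ⟨?_, h.snoc hlast hv hk, by simp⟩, ?_⟩
    · simp only [List.length_append, List.length_drop]
      omega
    · simpa using h.1
  · rintro ⟨u, k, w, M⟩ hp ⟨u', k', w', M'⟩ hp' heq
    simp only [coe_sigma, Set.mem_sigma_iff, mem_coe, mem_clusterFinset] at hp hp'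
    simp only [Prod.mk.injEq] at heq
    obtain ⟨rfl, rfl, rfl⟩ := hp.2.2.2.1.eq_of_append_eq hp'.2.2.2.1
      (mem_overlapLengths.mp hp.2.1).2.2.1 (mem_overlapLengths.mp hp'.2.1).2.2.1 heq.1 heq.2
    obtain rfl : u = u' := Option.some_inj.mp (hp.2.2.2.2.symm.trans hp'.2.2.2.2)
    rfl
  · rintro ⟨w, L⟩ hq
    obtain ⟨⟨hw, h, hlast⟩, hL⟩ := (mem_filter.mp hq).imp_left mem_clusterFinset.mp
    obtain ⟨u, k, w', M, hcl, hu, hk, rfl, rfl⟩ := h.exists_eq_snoc hL hlast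
    refine ⟨⟨u, k, w', M⟩, ?_, rfl⟩
    have hkv := (mem_overlapLengths.mp hk).2.2.1
    simp only [List.length_append, List.length_drop] at hw
    simp only [coe_sigma, Set.mem_sigma_iff, mem_coe, mem_clusterFinset]
    exact ⟨hcl.mem_of_getLast? hu, hk, by omega, hcl, hu⟩

theorem clusterWeightSum_eq (hv : v ∈ B) (n : ℕ) (x : R) :
    clusterWeightSum B v n x = (if n = v.length then x else 0) +
      x * ∑ u ∈ B, ∑ k ∈ overlapLengths u v, clusterWeightSum B u (n - (v.length - k)) x := by
  rw [clusterWeightSum, ← sum_filter_add_sum_filter_not _ (fun q => q.2.length = 1),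
    filter_clusterFinset_length_eq_one hv, sum_filter_length_ne_one_clusterFinset hv]
  split_ifs <;> simp

end Recursion

end Weights

section GeneratingFunctions

variable [Fintype V]

theorem clusterCountEnd_eq_card (B : Finset (List V)) (v : List V) (n l : ℕ) :
    clusterCountEnd B v n l = #{q ∈ clusterFinset B v n | q.2.length = l} := by
  rw [← Nat.card_eq_finsetCard, clusterCountEnd]
  refine Nat.card_eq_of_bijective
    (fun q => ⟨(List.ofFn q.1.1, q.1.2),
      mem_filter.mpr ⟨mem_clusterFinset.mpr ⟨List.length_ofFn, q.2.1, q.2.2.2⟩, q.2.2.1⟩⟩)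
    ⟨fun q q' hq => ?_, ?_⟩
  · simp only [Subtype.mk.injEq, Prod.mk.injEq, List.ofFn_inj] at hq
    exact Subtype.ext (Prod.ext hq.1 hq.2)
  · rintro ⟨⟨w, L⟩, hq⟩
    obtain ⟨⟨rfl, hcl, hlast⟩, hl⟩ := mem_filter.mp hq |>.imp_left mem_clusterFinset.mp
    exact ⟨⟨(w.get, L), by rwa [List.ofFn_get], hl, hlast⟩, by simp⟩

theorem coeff_clusterGFEndT (hB : ∀ b ∈ B, b ≠ []) (v : List V) (n : ℕ) :
    PowerSeries.coeff n (clusterGFEndT B v) = clusterWeightSum B v n (Polynomial.X - 1) := by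
  have hmaps : ∀ q ∈ clusterFinset B v n, q.2.length ∈ range (n + 1) := fun q hq => by
    obtain ⟨hlen, h, -⟩ := mem_clusterFinset.mp hq
    exact mem_range.mpr (Nat.lt_succ_of_le (hlen ▸ h.length_le hB))
  rw [clusterGFEndT, PowerSeries.coeff_mk, clusterWeightSum, ← sum_fiberwise_of_maps_to hmaps]
  refine sum_congr rfl fun l _ => ?_
  rw [sum_congr rfl fun q hq => by rw [(mem_filter.mp hq).2], sum_const, nsmul_eq_mul, mul_comm,
    clusterCountEnd_eq_card]

end GeneratingFunctions

end Clusters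

theorem stmt8_general {V : Type*} [Fintype V] [DecidableEq V]
    (B : Finset (List V)) (hB : ∀ b ∈ B, b ≠ []) :
    ∀ v ∈ B, clusterGFEndT B v =
      PowerSeries.C (R := Polynomial ℤ) (Polynomial.X - 1) * PowerSeries.X ^ v.length +
        PowerSeries.C (R := Polynomial ℤ) (Polynomial.X - 1) *
          ∑ u ∈ B, corrT u v * clusterGFEndT B u := by
  intro v hv
  ext n
  have hterm : ∀ u ∈ B, PowerSeries.coeff n (corrT u v * clusterGFEndT B u) =
      ∑ k ∈ overlapLengths u v, clusterWeightSum B u (n - (v.length - k)) (Polynomial.X - 1) := by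
    intro u hu
    refine (coeff_corrT_mul u v _ n).trans (sum_congr rfl fun k _ => ?_)
    split_ifs with hk
    · exact coeff_clusterGFEndT hB u _
    · rw [Nat.sub_eq_zero_of_le (by omega), clusterWeightSum, clusterFinset_zero (hB u hu),
        sum_empty]
  rw [coeff_clusterGFEndT hB, clusterWeightSum_eq hv, map_add, PowerSeries.coeff_C_mul,
    PowerSeries.coeff_C_mul, PowerSeries.coeff_X_pow, map_sum, sum_congr rfl hterm]
  split_ifs <;> simp

/-- The linear system for the `t`-weighted cluster generating functions:
`C_v(s,t) = (t-1)·s^{|v|} + (t-1)·∑_{u ∈ B} (u:v)(s)·C_u(s,t)`. -/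
theorem stmt8 {V : Type*} [Fintype V] [DecidableEq V]
    (B : Finset (List V)) (hB : ∀ b ∈ B, b ≠ [])
    (hanti : ∀ u ∈ B, ∀ v ∈ B, u <:+: v → u = v) :
    ∀ v ∈ B, clusterGFEndT B v =
      PowerSeries.C (R := Polynomial ℤ) (Polynomial.X - 1) * PowerSeries.X ^ v.length +
        PowerSeries.C (R := Polynomial ℤ) (Polynomial.X - 1) *
          ∑ u ∈ B, corrT u v * clusterGFEndT B u :=
  stmt8_general B hB
end

section
/- Let V be an alphabet with 26 letters (identified with Fin 26) and let B = {[0,1,0,1], [2,3,2,3], [0,1,2,3], [2,3,0,1]} (encoding the words PIPI, CACA, PICA and CAPI). Let a(n) be the number of words of length n over V avoiding B. Then the identity (Σ_{n≥0} a(n) s^n) · (1 − 26s + 2s² − 52s³ + 4s⁴) = 1 + 2s² holds in ℤ[[s]]. -/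
/-- The set of bad words: `PIPI`, `CACA`, `PICA`, `CAPI`, encoded over `Fin 26`. -/
def badPC4 : Finset (List (Fin 26)) :=
  {[0, 1, 0, 1], [2, 3, 2, 3], [0, 1, 2, 3], [2, 3, 0, 1]}

/-- The number of words of length `n` over a 26-letter alphabet avoiding
`PIPI`, `CACA`, `PICA` and `CAPI` as factors. -/
noncomputable def aPC4 (n : ℕ) : ℕ :=
  Nat.card {f : Fin n → Fin 26 // ∀ b ∈ badPC4, ¬ b <:+: List.ofFn f}

/-!
Call `PI` and `CA` *blocks*; the forbidden words are exactly the products of two blocks. Let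
`a n` count the words of length `n` avoiding them and `b n` those among them that start with a
block. Prepending a letter to an avoiding word creates a forbidden factor only when the word is
`I` or `A` followed by an avoiding word starting with a block, and the letter is then forced;
hence `a (n + 2) + 2 b n = 26 a (n + 1)`. A block followed by `w` avoids the forbidden words iff
`w` does and does not start with a block, so `b (n + 2) = 2 (a n - b n)`. Eliminating `b` gives
`a (n + 4) = 26 a (n + 3) - 2 a (n + 2) + 52 a (n + 1) - 4 a n`, which together with
`a n = 26 ^ n` for `n < 4` is the claimed identity of power series.
-/

open Finset PowerSeries

section Words

variable {α : Type*}

def Avoids (B : Finset (List α)) (l : List α) : Prop := ∀ b ∈ B, ¬ b <:+: l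

theorem avoids_cons_iff {B : Finset (List α)} {x : α} {l : List α} :
    Avoids B (x :: l) ↔ Avoids B l ∧ ∀ b ∈ B, ¬ b <+: x :: l := by
  simp only [Avoids, List.infix_cons_iff, not_or, imp_and, forall_and, and_comm]

theorem avoids_of_length_lt {B : Finset (List α)} {l : List α}
    (h : ∀ b ∈ B, l.length < b.length) : Avoids B l :=
  fun b hb hbl => (h b hb).not_ge hbl.length_le

variable [Fintype α]

noncomputable def wordCount (P : List α → Prop) (n : ℕ) : ℕ :=
  Nat.card {f : Fin n → α // P (List.ofFn f)}

theorem wordCount_succ (P : List α → Prop) (n : ℕ) :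
    wordCount P (n + 1) = ∑ x, wordCount (fun w => P (x :: w)) n := by
  simp only [wordCount]
  rw [← Nat.card_sigma]
  refine Nat.card_congr (((Fin.consEquiv fun _ => α).symm.subtypeEquiv fun f => ?_).trans
    (Equiv.subtypeProdEquivSigmaSubtype fun x f => P (x :: List.ofFn f)))
  rw [List.ofFn_succ]
  rfl

theorem wordCount_add_two (P : List α → Prop) (n : ℕ) :
    wordCount P (n + 2) = ∑ p : α × α, wordCount (fun w => P (p.1 :: p.2 :: w)) n := by
  simp only [wordCount_succ, Fintype.sum_prod_type]

theorem wordCount_and_add_wordCount_and_not (P Q : List α → Prop) (n : ℕ) :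
    wordCount (fun w => P w ∧ Q w) n + wordCount (fun w => P w ∧ ¬ Q w) n = wordCount P n := by
  classical
  simp only [wordCount, Nat.card_eq_fintype_card, Fintype.card_subtype, ← Finset.filter_filter]
  exact Finset.card_filter_add_card_filter_not _

theorem wordCount_of_forall {P : List α → Prop} {n : ℕ} (h : ∀ l : List α, l.length = n → P l) :
    wordCount P n = Fintype.card α ^ n := by
  rw [wordCount, Nat.card_congr (Equiv.subtypeUnivEquiv fun f => h _ (List.length_ofFn))]
  simp

theorem sum_wordCount_eq_card_mul {ι : Type*} [Fintype ι] (S : Finset ι)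
    (P : ι → List α → Prop) (Q : List α → Prop) (n : ℕ)
    (hS : ∀ i ∈ S, ∀ w, P i w ↔ Q w) (hSc : ∀ i ∉ S, ∀ w, ¬ P i w) :
    ∑ i, wordCount (P i) n = #S * wordCount Q n := by
  classical
  calc ∑ i, wordCount (P i) n = ∑ i, if i ∈ S then wordCount Q n else 0 := by
        refine Fintype.sum_congr _ _ fun i => ?_
        split_ifs with hi
        · exact congrArg (wordCount · n) (funext fun w => propext (hS i hi w))
        · simp [wordCount, hSc i hi]
    _ = #S * wordCount Q n := by rw [Finset.sum_ite_mem, univ_inter, sum_const, smul_eq_mul]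

end Words

namespace PicaCapi

def blocks : Finset (Fin 26 × Fin 26) := {(0, 1), (2, 3)}

def StartsWithBlock (l : List (Fin 26)) : Prop := ∃ p ∈ blocks, [p.1, p.2] <+: l

theorem startsWithBlock_cons_cons {x y : Fin 26} {w : List (Fin 26)} :
    StartsWithBlock (x :: y :: w) ↔ (x, y) ∈ blocks := by
  simp [StartsWithBlock, blocks, List.cons_prefix_cons, eq_comm]

theorem exists_bad_prefix_iff {x y : Fin 26} {w : List (Fin 26)} :
    (∃ b ∈ badPC4, b <+: x :: y :: w) ↔ (x, y) ∈ blocks ∧ StartsWithBlock w := by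
  simp only [badPC4, mem_insert, mem_singleton, exists_eq_or_imp, List.cons_prefix_cons,
    existsAndEq, true_and, blocks, Prod.mk.injEq, StartsWithBlock]
  tauto

theorem avoids_cons_cons_iff {x y : Fin 26} {w : List (Fin 26)} :
    Avoids badPC4 (x :: y :: w) ↔
      Avoids badPC4 (y :: w) ∧ ¬ ((x, y) ∈ blocks ∧ StartsWithBlock w) := by
  rw [avoids_cons_iff, ← exists_bad_prefix_iff]
  simp

theorem avoids_cons_iff_of_mem_blocks {x y : Fin 26} (h : (x, y) ∈ blocks) {w : List (Fin 26)} :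
    Avoids badPC4 (y :: w) ↔ Avoids badPC4 w := by
  rw [avoids_cons_iff, and_iff_left_iff_imp]
  intro _ b hb hpre
  simp only [blocks, badPC4, mem_insert, mem_singleton, Prod.mk.injEq] at h hb
  rcases h with ⟨-, rfl⟩ | ⟨-, rfl⟩ <;> rcases hb with rfl | rfl | rfl | rfl <;>
    simp [List.cons_prefix_cons] at hpre

theorem card_blocks : #blocks = 2 := rfl

noncomputable def avoidCount (n : ℕ) : ℕ := wordCount (Avoids badPC4) n

noncomputable def blockAvoidCount (n : ℕ) : ℕ :=
  wordCount (fun w => Avoids badPC4 w ∧ StartsWithBlock w) n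

theorem avoidCount_add_two (n : ℕ) :
    2 * blockAvoidCount n + avoidCount (n + 2) = 26 * avoidCount (n + 1) := by
  have hcons : 26 * avoidCount (n + 1) =
      ∑ p : Fin 26 × Fin 26, wordCount (fun w => Avoids badPC4 (p.2 :: w)) n := by
    simp only [avoidCount, wordCount_succ, Fintype.sum_prod_type, sum_const, card_univ,
      Fintype.card_fin, smul_eq_mul]
  have hbad : ∑ p : Fin 26 × Fin 26, wordCount
      (fun w => Avoids badPC4 (p.2 :: w) ∧ (p ∈ blocks ∧ StartsWithBlock w)) n =
      2 * blockAvoidCount n := by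
    rw [← card_blocks, blockAvoidCount]
    refine sum_wordCount_eq_card_mul _ _ _ _ (fun p hp w => ?_) (fun p hp w h => hp h.2.1)
    rw [avoids_cons_iff_of_mem_blocks hp]
    exact ⟨fun h => ⟨h.1, h.2.2⟩, fun h => ⟨h.1, hp, h.2⟩⟩
  rw [hcons, ← hbad, avoidCount, wordCount_add_two, ← sum_add_distrib]
  refine Fintype.sum_congr _ _ fun p => ?_
  simp only [avoids_cons_cons_iff]
  exact wordCount_and_add_wordCount_and_not _ _ n

theorem blockAvoidCount_add_two (n : ℕ) :
    blockAvoidCount (n + 2) + 2 * blockAvoidCount n = 2 * avoidCount n := by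
  have hblock : blockAvoidCount (n + 2) =
      2 * wordCount (fun w => Avoids badPC4 w ∧ ¬ StartsWithBlock w) n := by
    rw [blockAvoidCount, wordCount_add_two, ← card_blocks]
    refine sum_wordCount_eq_card_mul _ _ _ _ (fun p hp w => ?_) (fun p hp w h => ?_)
    · rw [startsWithBlock_cons_cons, avoids_cons_cons_iff, avoids_cons_iff_of_mem_blocks hp]
      tauto
    · exact hp (startsWithBlock_cons_cons.mp h.2)
  have hsplit := wordCount_and_add_wordCount_and_not (Avoids badPC4) StartsWithBlock n
  rw [hblock, avoidCount, blockAvoidCount, ← hsplit]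
  ring

theorem avoidCount_add_four (n : ℕ) :
    avoidCount (n + 4) + 2 * avoidCount (n + 2) + 4 * avoidCount n =
      26 * avoidCount (n + 3) + 52 * avoidCount (n + 1) := by
  have h₀ := avoidCount_add_two n
  have h₂ : 2 * blockAvoidCount (n + 2) + avoidCount (n + 4) = 26 * avoidCount (n + 3) :=
    avoidCount_add_two (n + 2)
  have hb := blockAvoidCount_add_two n
  omega

theorem avoidCount_of_lt_four {n : ℕ} (hn : n < 4) : avoidCount n = 26 ^ n := by
  have hlen : ∀ b ∈ badPC4, b.length = 4 := by decide
  have hshort (l : List (Fin 26)) (hl : l.length = n) : Avoids badPC4 l :=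
    avoids_of_length_lt fun b hb => by rw [hlen b hb, hl]; exact hn
  rw [avoidCount, wordCount_of_forall hshort, Fintype.card_fin]

end PicaCapi

theorem PowerSeries.mk_mul_eq_of_recurrence (a : ℕ → ℤ) (hinit : ∀ n < 4, a n = 26 ^ n)
    (h : ∀ n, a (n + 4) + 2 * a (n + 2) + 4 * a n = 26 * a (n + 3) + 52 * a (n + 1)) :
    mk a * (1 - 26 * X + 2 * X ^ 2 - 52 * X ^ 3 + 4 * X ^ 4) = 1 + 2 * X ^ 2 := by
  ext n
  simp only [← map_ofNat (C (R := ℤ)), mul_add, mul_sub, mul_one, mul_left_comm (mk a), map_add,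
    map_sub, coeff_C_mul, coeff_mul_X_pow', coeff_C, coeff_one, coeff_mk]
  match n with
  | 0 | 1 | 2 | 3 => simp [hinit]
  | n + 4 =>
    simp only [coeff_succ_mul_X, coeff_mk, le_add_iff_nonneg_left, zero_le, ↓reduceIte,
      Nat.reduceSubDiff, add_tsub_cancel_right, Nat.add_eq_zero_iff, OfNat.ofNat_ne_zero, and_false,
      add_zero]
    linarith [h n]

/-- `f(s)·(1 - 26s + 2s² - 52s³ + 4s⁴) = 1 + 2s²` for the generating function of
words avoiding `PIPI`, `CACA`, `PICA` and `CAPI`. -/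
theorem stmt10 :
    PowerSeries.mk (fun n => (aPC4 n : ℤ)) *
        (1 - 26 * PowerSeries.X + 2 * PowerSeries.X ^ 2 - 52 * PowerSeries.X ^ 3 +
          4 * PowerSeries.X ^ 4) =
      1 + 2 * PowerSeries.X ^ 2 := by
  have haPC4 : aPC4 = PicaCapi.avoidCount := rfl
  refine PowerSeries.mk_mul_eq_of_recurrence _ (fun n hn => ?_) fun n => ?_
  · rw [haPC4]
    exact_mod_cast PicaCapi.avoidCount_of_lt_four hn
  · rw [haPC4]
    exact_mod_cast PicaCapi.avoidCount_add_four n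
end
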